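/- For a > 0, b > 0, a positive integer G, and 0 ≤ q̂ ≤ G, consider the family of probability densities on (0,1) proportional to θ^{a-1}(1-θ)^{b-1}(1-θz)^{G-q̂} ∏_{g=1}^{q̂}(1-θx_g), where z = 1 - λ₁/λ₀ and x_g = 1 - (λ₁/λ₀)e^{c_g(λ₀-λ₁)} with fixed constants c_g > 0 and fixed λ₁ > 0. Then as λ₀ → ∞, the mean of this distribution converges to (a + q̂)/(a + b + G). -/

import Mathlib

/-! Writing `M_g = (λ₁/λ₀) e^{c_g(λ₀-λ₁)}`, each factor `1 - θ x_g` equals `M_g (θ + (1-θ)/M_g)`.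
The constants `M_g` cancel in the ratio of integrals, and since `M_g → ∞` and `z → 1` the
remaining factor `(1-θz)^{G-q̂} ∏ (θ + (1-θ)/M_g)` lies in `[0,1]` and tends to
`(1-θ)^{G-q̂} θ^{q̂}`. By dominated convergence the ratio tends to
`B(a+q̂+1, b+G-q̂) / B(a+q̂, b+G-q̂) = (a+q̂)/(a+b+G)`. -/

open Filter Real Set Topology MeasureTheory ProbabilityTheory

section Beta

variable {α β : ℝ}

lemma ofReal_rpow_mul_one_sub_rpow {x : ℝ} (hx : x ∈ Icc (0 : ℝ) 1) :
    ((x ^ (α - 1) * (1 - x) ^ (β - 1) : ℝ) : ℂ) =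
      (x : ℂ) ^ ((α : ℂ) - 1) * (1 - (x : ℂ)) ^ ((β : ℂ) - 1) := by
  rw [Complex.ofReal_mul, Complex.ofReal_cpow hx.1, Complex.ofReal_cpow (sub_nonneg.2 hx.2)]
  push_cast
  rfl

lemma betaIntegral_ofReal (α β : ℝ) :
    Complex.betaIntegral α β =
      ((∫ x in (0 : ℝ)..1, x ^ (α - 1) * (1 - x) ^ (β - 1) : ℝ) : ℂ) := by
  rw [Complex.betaIntegral, ← intervalIntegral.integral_ofReal]
  refine intervalIntegral.integral_congr fun x hx => ?_
  rw [uIcc_of_le zero_le_one] at hx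
  exact (ofReal_rpow_mul_one_sub_rpow hx).symm

lemma integral_rpow_mul_one_sub_rpow (hα : 0 < α) (hβ : 0 < β) :
    ∫ x in (0 : ℝ)..1, x ^ (α - 1) * (1 - x) ^ (β - 1) = beta α β := by
  rw [beta_eq_betaIntegralReal α β hα hβ, betaIntegral_ofReal, Complex.ofReal_re]

lemma intervalIntegrable_rpow_mul_one_sub_rpow (hα : 0 < α) (hβ : 0 < β) :
    IntervalIntegrable (fun x => x ^ (α - 1) * (1 - x) ^ (β - 1)) volume 0 1 := by
  have h := Complex.betaIntegral_convergent (u := α) (v := β) (by simpa) (by simpa)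
  rw [intervalIntegrable_iff_integrableOn_Ioc_of_le zero_le_one] at h ⊢
  refine h.re.congr ?_
  filter_upwards [ae_restrict_mem measurableSet_Ioc] with x hx
  rw [← ofReal_rpow_mul_one_sub_rpow ⟨hx.1.le, hx.2⟩]
  exact Complex.ofReal_re _

lemma beta_add_one_left_div_beta (hα : 0 < α) (hβ : 0 < β) :
    beta (α + 1) β / beta α β = α / (α + β) := by
  have hαβ : 0 < α + β := add_pos hα hβ
  have := Gamma_pos_of_pos hα
  have := Gamma_pos_of_pos hβ
  have := Gamma_pos_of_pos hαβ
  rw [beta, beta, add_right_comm, Gamma_add_one hα.ne', Gamma_add_one hαβ.ne']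
  field_simp

end Beta

lemma tendsto_mul_exp_mul_sub_atTop {c lam1 : ℝ} (hc : 0 < c) (hlam1 : 0 < lam1) :
    Tendsto (fun lam0 : ℝ => lam1 / lam0 * exp (c * (lam0 - lam1))) atTop atTop := by
  have h : Tendsto (fun x : ℝ => exp (c * x) / (c * x)) atTop atTop := by
    simpa [Function.comp_def] using
      (tendsto_exp_div_pow_atTop 1).comp (tendsto_id.const_mul_atTop hc)
  refine (h.const_mul_atTop (by positivity : 0 < lam1 * c * exp (-(c * lam1)))).congr' ?_
  filter_upwards [eventually_gt_atTop 0] with x hx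
  rw [mul_sub, exp_sub, exp_neg]
  field_simp

section Limits

variable {ι κ : Type*} [Fintype κ] {l : Filter ι}

theorem tendsto_integral_rpow_mul_one_sub_rpow_mul [l.IsCountablyGenerated] {α β : ℝ}
    (hα : 0 < α) (hβ : 0 < β) {f : ι → ℝ → ℝ} {F : ℝ → ℝ} (hf_meas : ∀ t, Measurable (f t))
    (hf_le : ∀ᶠ t in l, ∀ x ∈ Ioc (0 : ℝ) 1, |f t x| ≤ 1)
    (hf_lim : ∀ x ∈ Ioc (0 : ℝ) 1, Tendsto (f · x) l (𝓝 (F x))) :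
    Tendsto (fun t => ∫ x in (0 : ℝ)..1, x ^ (α - 1) * (1 - x) ^ (β - 1) * f t x) l
      (𝓝 (∫ x in (0 : ℝ)..1, x ^ (α - 1) * (1 - x) ^ (β - 1) * F x)) := by
  refine intervalIntegral.tendsto_integral_filter_of_dominated_convergence _
    (Eventually.of_forall fun t => ((by fun_prop : Measurable fun x : ℝ =>
      x ^ (α - 1) * (1 - x) ^ (β - 1)).mul (hf_meas t)).aestronglyMeasurable) ?_
    (intervalIntegrable_rpow_mul_one_sub_rpow hα hβ) (ae_of_all _ fun x hx => ?_)
  · filter_upwards [hf_le] with t ht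
    refine ae_of_all _ fun x hx => ?_
    rw [uIoc_of_le zero_le_one] at hx
    have hw : 0 ≤ x ^ (α - 1) * (1 - x) ^ (β - 1) :=
      mul_nonneg (rpow_nonneg hx.1.le _) (rpow_nonneg (sub_nonneg.2 hx.2) _)
    rw [norm_mul, Real.norm_of_nonneg hw]
    exact mul_le_of_le_one_right hw (ht x hx)
  · rw [uIoc_of_le zero_le_one] at hx
    exact (hf_lim x hx).const_mul _

lemma one_sub_mul_one_sub_eq_mul_add_div {x M : ℝ} (hM : M ≠ 0) :
    1 - x * (1 - M) = M * (x + (1 - x) / M) := by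
  field_simp
  ring

lemma abs_one_sub_mul_pow_mul_prod_le_one {x z : ℝ} {M : κ → ℝ} (hx : x ∈ Icc (0 : ℝ) 1)
    (hz : z ∈ Icc (0 : ℝ) 1) (hM : ∀ g, 1 ≤ M g) (n : ℕ) :
    |(1 - x * z) ^ n * ∏ g, (x + (1 - x) / M g)| ≤ 1 := by
  obtain ⟨hx0, hx1⟩ := hx
  obtain ⟨hz0, hz1⟩ := hz
  have hxz : 0 ≤ 1 - x * z ∧ 1 - x * z ≤ 1 := ⟨by nlinarith, by nlinarith⟩
  have hfac : ∀ g, 0 ≤ x + (1 - x) / M g ∧ x + (1 - x) / M g ≤ 1 := fun g =>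
    ⟨by have := zero_le_one.trans (hM g); have := sub_nonneg.2 hx1; positivity,
      by linarith [div_le_self (sub_nonneg.2 hx1) (hM g)]⟩
  have hprod : 0 ≤ ∏ g, (x + (1 - x) / M g) := Finset.prod_nonneg fun g _ => (hfac g).1
  rw [abs_of_nonneg (mul_nonneg (pow_nonneg hxz.1 n) hprod)]
  exact mul_le_one₀ (pow_le_one₀ hxz.1 hxz.2) hprod
    (Finset.prod_le_one (fun g _ => (hfac g).1) fun g _ => (hfac g).2)

lemma tendsto_one_sub_mul_pow_mul_prod {z : ι → ℝ} {M : κ → ι → ℝ} (hz : Tendsto z l (𝓝 1))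
    (hM : ∀ g, Tendsto (M g) l atTop) (x : ℝ) (n : ℕ) :
    Tendsto (fun t => (1 - x * z t) ^ n * ∏ g, (x + (1 - x) / M g t)) l
      (𝓝 ((1 - x) ^ n * x ^ Fintype.card κ)) := by
  have hprod : Tendsto (fun t => ∏ g, (x + (1 - x) / M g t)) l (𝓝 (∏ _g : κ, x)) :=
    tendsto_finsetProd _ fun g _ => by
      simpa using tendsto_const_nhds.add (tendsto_const_nhds.div_atTop (hM g))
  rw [Finset.prod_const, Finset.card_univ] at hprod
  simpa using ((tendsto_const_nhds.sub (hz.const_mul x)).pow n).mul hprod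

theorem tendsto_integral_rpow_mul_one_sub_rpow_mul_prod [l.IsCountablyGenerated] {α β : ℝ}
    (hα : 0 < α) (hβ : 0 < β) {z : ι → ℝ} {M : κ → ι → ℝ} (hz : Tendsto z l (𝓝 1))
    (hz_mem : ∀ᶠ t in l, z t ∈ Icc (0 : ℝ) 1) (hM : ∀ g, Tendsto (M g) l atTop) (n : ℕ) :
    Tendsto (fun t => ∫ x in (0 : ℝ)..1, x ^ (α - 1) * (1 - x) ^ (β - 1) * (1 - x * z t) ^ n *
        ∏ g, (x + (1 - x) / M g t)) l
      (𝓝 (beta (α + Fintype.card κ) (β + n))) := by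
  have hle : ∀ᶠ t in l, ∀ x ∈ Ioc (0 : ℝ) 1,
      |(1 - x * z t) ^ n * ∏ g, (x + (1 - x) / M g t)| ≤ 1 := by
    filter_upwards [hz_mem, eventually_all.2 fun g => (hM g).eventually_ge_atTop 1]
      with t hzt hMt x hx
    exact abs_one_sub_mul_pow_mul_prod_le_one (Ioc_subset_Icc_self hx) hzt hMt n
  have h := tendsto_integral_rpow_mul_one_sub_rpow_mul hα hβ (fun t => by fun_prop) hle
    fun x _ => tendsto_one_sub_mul_pow_mul_prod hz hM x n
  simp only [← mul_assoc] at h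
  convert h using 2
  rw [← integral_rpow_mul_one_sub_rpow (by positivity) (by positivity)]
  refine intervalIntegral.integral_congr_ae ?_
  filter_upwards [(countable_singleton (1 : ℝ)).ae_notMem volume] with x hx1 hx
  rw [uIoc_of_le zero_le_one] at hx
  have hx1' : 0 < 1 - x := sub_pos.2 (lt_of_le_of_ne hx.2 hx1)
  rw [add_sub_right_comm, add_sub_right_comm, rpow_add_natCast hx.1.ne',
    rpow_add_natCast hx1'.ne']
  ring

lemma integral_mul_prod_one_sub_mul_one_sub {w : ℝ → ℝ} {M : κ → ℝ} (hM : ∀ g, M g ≠ 0)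
    (a b : ℝ) :
    ∫ x in a..b, w x * ∏ g, (1 - x * (1 - M g)) =
      (∏ g, M g) * ∫ x in a..b, w x * ∏ g, (x + (1 - x) / M g) := by
  rw [← intervalIntegral.integral_const_mul]
  congr 1 with x
  simp only [one_sub_mul_one_sub_eq_mul_add_div (hM _), Finset.prod_mul_distrib]
  ring

end Limits

theorem ssgl_theta_conditional_mean_limit_general (a b : ℝ) (ha : 0 < a) (hb : 0 < b)
    (G q : ℕ) (hq : q ≤ G) (c : Fin q → ℝ) (hc : ∀ g, 0 < c g)
    (lam1 : ℝ) (hlam1 : 0 < lam1) :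
    Tendsto (fun lam0 : ℝ =>
        (∫ θ in (0:ℝ)..1, θ ^ a * (1 - θ) ^ (b - 1) * (1 - θ * (1 - lam1 / lam0)) ^ (G - q) *
            ∏ g, (1 - θ * (1 - (lam1 / lam0) * Real.exp (c g * (lam0 - lam1))))) /
        (∫ θ in (0:ℝ)..1, θ ^ (a - 1) * (1 - θ) ^ (b - 1) * (1 - θ * (1 - lam1 / lam0)) ^ (G - q) *
            ∏ g, (1 - θ * (1 - (lam1 / lam0) * Real.exp (c g * (lam0 - lam1))))))
      atTop (nhds ((a + q) / (a + b + G))) := by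
  have hM (g : Fin q) := tendsto_mul_exp_mul_sub_atTop (hc g) hlam1
  have hz : Tendsto (fun lam0 : ℝ => 1 - lam1 / lam0) atTop (𝓝 1) := by
    simpa using tendsto_const_nhds.sub ((tendsto_const_nhds (x := lam1)).div_atTop tendsto_id)
  have hz_mem : ∀ᶠ lam0 in atTop, 1 - lam1 / lam0 ∈ Icc (0 : ℝ) 1 := by
    filter_upwards [eventually_ge_atTop lam1] with lam0 h
    have hlam0 := hlam1.trans_le h
    exact ⟨sub_nonneg.2 ((div_le_one hlam0).2 h), sub_le_self _ (by positivity)⟩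
  have hlim (α : ℝ) (hα : 0 < α) :=
    tendsto_integral_rpow_mul_one_sub_rpow_mul_prod hα hb hz hz_mem hM (G - q)
  have hratio := (hlim (a + 1) (by linarith)).div (hlim a ha)
    (beta_pos (by positivity) (by positivity)).ne'
  rw [Fintype.card_fin, add_right_comm, beta_add_one_left_div_beta (by positivity) (by positivity),
    Nat.cast_sub hq, show a + q + (b + (G - q)) = a + b + G by ring] at hratio
  simp only [add_sub_cancel_right] at hratio
  refine hratio.congr' ?_
  filter_upwards [eventually_gt_atTop 0] with lam0 hlam0
  have hM0 (g : Fin q) : lam1 / lam0 * exp (c g * (lam0 - lam1)) ≠ 0 := by positivity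
  rw [Pi.div_apply, integral_mul_prod_one_sub_mul_one_sub hM0,
    integral_mul_prod_one_sub_mul_one_sub hM0,
    mul_div_mul_left _ _ (Finset.prod_ne_zero_iff.2 fun g _ => hM0 g)]

/-- As `λ₀ → ∞`, the mean of the generalized Gauss hypergeometric distribution
`π(θ) ∝ θ^{a-1}(1-θ)^{b-1}(1-θz)^{G-q̂} ∏_{g=1}^{q̂}(1-θx_g)` (with `z = 1 - λ₁/λ₀` and
`x_g = 1 - (λ₁/λ₀)e^{c_g(λ₀-λ₁)}`) converges to `(a + q̂)/(a + b + G)`. -/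
theorem ssgl_theta_conditional_mean_limit (a b : ℝ) (ha : 0 < a) (hb : 0 < b)
    (G q : ℕ) (hG : 0 < G) (hq : q ≤ G) (c : Fin q → ℝ) (hc : ∀ g, 0 < c g)
    (lam1 : ℝ) (hlam1 : 0 < lam1) :
    Tendsto (fun lam0 : ℝ =>
        (∫ θ in (0:ℝ)..1, θ ^ a * (1 - θ) ^ (b - 1) * (1 - θ * (1 - lam1 / lam0)) ^ (G - q) *
            ∏ g, (1 - θ * (1 - (lam1 / lam0) * Real.exp (c g * (lam0 - lam1))))) /
        (∫ θ in (0:ℝ)..1, θ ^ (a - 1) * (1 - θ) ^ (b - 1) * (1 - θ * (1 - lam1 / lam0)) ^ (G - q) *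
            ∏ g, (1 - θ * (1 - (lam1 / lam0) * Real.exp (c g * (lam0 - lam1))))))
      atTop (nhds ((a + q) / (a + b + G))) :=
  ssgl_theta_conditional_mean_limit_general a b ha hb G q hq c hc lam1 hlam1
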